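/- Let Δ be a set of formulas of a language L and let A ⊆ B be two L-structures such that A ⪯_Δ B (i.e. for every formula φ(x) ∈ Δ and every tuple a from A, A ⊨ φ(a) if and only if B ⊨ φ(a)). If the theory of B is Δ-NIP, then so is the theory of A. -/

import Mathlib

open FirstOrder Language

namespace NIPPaper

universe u v

variable {L : FirstOrder.Language.{u, v}}

/-- A partitioned formula `φ(x, y)` has the independence property (IP) with respect to the
theory `T` if in some model of `T` there are sequences `(aᵢ : i < ω)` and `(b_S : S ⊆ ω)`
such that `φ(aᵢ, b_S)` holds iff `i ∈ S`. -/
def Theory.HasIP (T : L.Theory) {α β : Type} (φ : L.Formula (α ⊕ β)) : Prop :=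
  ∃ (M : Theory.ModelType.{u, v, max u v} T) (a : ℕ → α → M) (b : Set ℕ → β → M),
    ∀ (i : ℕ) (s : Set ℕ), φ.Realize (Sum.elim (a i) (b s)) ↔ i ∈ s

/-- A set `Δ` of partitioned formulas of `L` (one set for each pair of finite tuples of
variables). -/
def FormulaFamily (L : FirstOrder.Language.{u, v}) : Type _ :=
  ∀ a b : ℕ, Set (L.Formula (Fin a ⊕ Fin b))

/-- A theory `T` is `Δ`-NIP if every formula in `Δ` is NIP with respect to `T`. -/
def Theory.IsDeltaNIP (T : L.Theory) (Δ : FormulaFamily L) : Prop :=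
  ∀ (a b : ℕ) (φ : L.Formula (Fin a ⊕ Fin b)), φ ∈ Δ a b → ¬ Theory.HasIP T φ

/-- `A ⪯_Δ B` for a substructure `A` of `B` : every `Δ`-formula with parameters from `A`
holds in `A` if and only if it holds in `B`. -/
def DeltaClosed {B : Type u} [L.Structure B] (Δ : FormulaFamily L) (A : L.Substructure B) :
    Prop :=
  ∀ (a b : ℕ) (φ : L.Formula (Fin a ⊕ Fin b)), φ ∈ Δ a b →
    ∀ v : (Fin a ⊕ Fin b) → A,
      (φ.Realize v ↔ φ.Realize fun i => ((v i : B)))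

/-- Auxiliary: realization of a relabeled formula, as a bounded formula with no extra
free variables. -/
lemma realize_relabel_aux {M : Type*} [L.Structure M] {α β : Type*} (φ : L.Formula α)
    (g : α → β) (v : β → M) (xs : Fin 0 → M) :
    BoundedFormula.Realize (φ.relabel g) v xs ↔ φ.Realize (v ∘ g) := by
  rw [Subsingleton.elim xs default]
  exact Formula.realize_relabel

/-- Auxiliary: transport a realization along an (extensional) equality of valuations. -/
lemma realize_congr_val {M : Type*} [L.Structure M] {α : Type*} (φ : L.Formula α)
    {v w : α → M} (h : ∀ x, v x = w x) : φ.Realize v ↔ φ.Realize w := by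
  rw [funext h]

/-- **Statement 11.** Let `Δ` be a set of formulas of a language `L` and let `A ⊆ B` be two
`L`-structures such that `A ⪯_Δ B`.  If the theory of `B` is `Δ`-NIP, then so is the
theory of `A`. -/
theorem deltaNIP_of_deltaClosed_substructure
    {B : Type u} [L.Structure B] (Δ : FormulaFamily L) (A : L.Substructure B)
    (hA : DeltaClosed Δ A)
    (hB : Theory.IsDeltaNIP (L.completeTheory B) Δ) :
    Theory.IsDeltaNIP (L.completeTheory A) Δ := by
  classical
  intro m n φ hφ hIP
  obtain ⟨M, a, b, hab⟩ := hIP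
  refine hB m n φ hφ ?_
  -- First, `A` is nonempty, since `M` (a nonempty model of its complete theory) exists.
  have hAne : Nonempty A := by
    by_contra hA0
    have hθ : A ⊨ (BoundedFormula.all (⊥ : L.BoundedFormula Empty 1)) := by
      rw [Sentence.Realize, Formula.Realize, BoundedFormula.realize_all]
      intro x
      exact absurd ⟨x⟩ hA0
    have hθM : (M : Type _) ⊨ (BoundedFormula.all (⊥ : L.BoundedFormula Empty 1)) :=
      Language.Theory.realize_sentence_of_mem (L.completeTheory A) (mem_completeTheory.2 hθ)
    rw [Sentence.Realize, Formula.Realize, BoundedFormula.realize_all] at hθM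
    exact (hθM (Classical.arbitrary M))
  have hBne : Nonempty B := ⟨((Classical.arbitrary A : A) : B)⟩
  -- The set of constants
  set γ := (ℕ × Fin m) ⊕ ((Set ℕ) × Fin n) with hγ
  -- the map sending a pair `(i, S)` to the relabeling of variables by constants
  let u : ℕ → Set ℕ → (Fin m ⊕ Fin n) → γ := fun i S =>
    Sum.elim (fun k => Sum.inl (i, k)) (fun k => Sum.inr (S, k))
  -- the pattern formula over the constants
  let ρ : ℕ → Set ℕ → L.Formula γ := fun i S => φ.relabel (u i S)
  let ψ : ℕ → Set ℕ → L[[γ]].Sentence := fun i S =>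
    if i ∈ S then Formula.equivSentence (ρ i S) else (Formula.equivSentence (ρ i S)).not
  let Ts : Option (ℕ × Set ℕ) → L[[γ]].Theory := fun o =>
    o.elim ((L.lhomWithConstants γ).onTheory (L.completeTheory B)) (fun p => {ψ p.1 p.2})
  have hsat : Language.Theory.IsSatisfiable (⋃ o, Ts o) := by
    rw [Language.Theory.isSatisfiable_iUnion_iff_isSatisfiable_iUnion_finset]
    intro s
    -- the finitely many pairs mentioned in `s`
    set pairs : Finset (ℕ × Set ℕ) := s.biUnion (fun o => o.elim ∅ singleton) with hpairs
    set I : Finset ℕ := insert 0 (pairs.image Prod.fst) with hI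
    set 𝒮 : Finset (Set ℕ) := insert ∅ (pairs.image Prod.snd) with h𝒮
    have h0I : (0 : ℕ) ∈ I := Finset.mem_insert_self _ _
    have h0𝒮 : (∅ : Set ℕ) ∈ 𝒮 := Finset.mem_insert_self _ _
    set τ := ({i // i ∈ I} × Fin m) ⊕ ({S // S ∈ 𝒮} × Fin n) with hτ
    let g : {i // i ∈ I} → {S // S ∈ 𝒮} → (Fin m ⊕ Fin n) → τ := fun i S =>
      Sum.elim (fun k => Sum.inl (i, k)) (fun k => Sum.inr (S, k))
    let χ : {i // i ∈ I} × {S // S ∈ 𝒮} → L.BoundedFormula τ 0 := fun p =>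
      if (p.1 : ℕ) ∈ (p.2 : Set ℕ) then φ.relabel (g p.1 p.2) else (φ.relabel (g p.1 p.2)).not
    let Ψ : L.Formula τ := BoundedFormula.iInf χ
    let σ : L.Sentence := (Ψ.relabel (Sum.inr : τ → Empty ⊕ τ)).iExs τ
    -- the pattern sentence `σ` holds in `M`
    have hMσ : (M : Type _) ⊨ σ := by
      rw [Sentence.Realize, Formula.realize_iExs]
      refine ⟨Sum.elim (fun q => a q.1 q.2) (fun q => b q.1 q.2), ?_⟩
      rw [Formula.realize_relabel, Formula.Realize, BoundedFormula.realize_iInf]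
      intro p
      by_cases hp : (p.1 : ℕ) ∈ (p.2 : Set ℕ)
      · rw [show χ p = φ.relabel (g p.1 p.2) from if_pos hp, realize_relabel_aux]
        refine (realize_congr_val φ (fun x => ?_)).2 ((hab p.1 p.2).2 hp)
        cases x <;> rfl
      · rw [show χ p = (φ.relabel (g p.1 p.2)).not from if_neg hp]
        rw [BoundedFormula.realize_not, realize_relabel_aux]
        intro hcon
        refine hp ((hab p.1 p.2).1 ((realize_congr_val φ (fun x => ?_)).1 hcon))
        cases x <;> rfl
    -- hence it holds in `A`
    have hAσ : A ⊨ σ := by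
      by_contra hcon
      have hmem : σ.not ∈ L.completeTheory A := mem_completeTheory.2 hcon
      exact (Language.Theory.realize_sentence_of_mem (L.completeTheory A) hmem :
        (M : Type _) ⊨ σ.not) hMσ
    -- extract witnesses in `A`
    rw [Sentence.Realize, Formula.realize_iExs] at hAσ
    obtain ⟨w, hw⟩ := hAσ
    rw [Formula.realize_relabel, Formula.Realize, BoundedFormula.realize_iInf] at hw
    -- interpret the constants in `B`
    let liftI : ℕ → {i // i ∈ I} := fun i => if h : i ∈ I then ⟨i, h⟩ else ⟨0, h0I⟩
    have liftI_eq : ∀ (i : ℕ) (h : i ∈ I), liftI i = ⟨i, h⟩ := fun i h => dif_pos h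
    let lift𝒮 : Set ℕ → {S // S ∈ 𝒮} := fun S => if h : S ∈ 𝒮 then ⟨S, h⟩ else ⟨∅, h0𝒮⟩
    have lift𝒮_eq : ∀ (S : Set ℕ) (h : S ∈ 𝒮), lift𝒮 S = ⟨S, h⟩ := fun S h => dif_pos h
    let c : γ → B :=
      Sum.elim
        (fun q : ℕ × Fin m => ((w (Sum.inl (liftI q.1, q.2)) : A) : B))
        (fun q : (Set ℕ) × Fin n => ((w (Sum.inr (lift𝒮 q.1, q.2)) : A) : B))
    letI : (constantsOn γ).Structure B := constantsOn.structure c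
    have hmodel : B ⊨ ⋃ o ∈ s, Ts o := by
      rw [Theory.model_iff]
      intro θ hθ
      simp only [Set.mem_iUnion] at hθ
      obtain ⟨o, ho, hθ⟩ := hθ
      match o with
      | none =>
        haveI hBmod : B ⊨ (L.lhomWithConstants γ).onTheory (L.completeTheory B) :=
          (LHom.onTheory_model _ _).2 inferInstance
        exact Language.Theory.realize_sentence_of_mem
          ((L.lhomWithConstants γ).onTheory (L.completeTheory B)) (show _ ∈ _ from hθ)
      | some p =>
        obtain ⟨i, S⟩ := p
        have hip : (i, S) ∈ pairs := by
          rw [hpairs, Finset.mem_biUnion]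
          exact ⟨some (i, S), ho, by simp⟩
        have hiI : i ∈ I := Finset.mem_insert_of_mem (Finset.mem_image_of_mem _ hip)
        have hS𝒮 : S ∈ 𝒮 := Finset.mem_insert_of_mem (Finset.mem_image_of_mem _ hip)
        have hθ' : θ = ψ i S := hθ
        subst hθ'
        -- realization of the pattern in `A`, from `hw`
        have hwp := hw (⟨i, hiI⟩, ⟨S, hS𝒮⟩)
        -- the common valuation in `A`
        set vA : (Fin m ⊕ Fin n) → A :=
          Sum.elim (fun k => w (Sum.inl (⟨i, hiI⟩, k))) (fun k => w (Sum.inr (⟨S, hS𝒮⟩, k)))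
          with hvA
        have hvalA : φ.Realize vA ↔ i ∈ S := by
          by_cases hp : i ∈ S
          · rw [show χ (⟨i, hiI⟩, ⟨S, hS𝒮⟩) = φ.relabel (g ⟨i, hiI⟩ ⟨S, hS𝒮⟩) from if_pos hp,
              realize_relabel_aux] at hwp
            refine iff_of_true ((realize_congr_val φ (fun x => ?_)).1 hwp) hp
            cases x <;> rfl
          · rw [show χ (⟨i, hiI⟩, ⟨S, hS𝒮⟩) = (φ.relabel (g ⟨i, hiI⟩ ⟨S, hS𝒮⟩)).not
                from if_neg hp,
              BoundedFormula.realize_not, realize_relabel_aux] at hwp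
            refine iff_of_false (fun hcon => hwp ?_) hp
            exact (realize_congr_val φ (fun x => by cases x <;> rfl)).2 hcon
        -- transfer to `B`
        have hvalB : φ.Realize (fun x => ((vA x : A) : B)) ↔ i ∈ S :=
          (hA m n φ hφ vA).symm.trans hvalA
        -- the constants realize the same valuation
        have hc : ∀ x : Fin m ⊕ Fin n, ((L.con (u i S x) : B)) = ((vA x : A) : B) := by
          intro x
          cases x with
          | inl k =>
            show c (Sum.inl (i, k)) = _
            simp only [c, Sum.elim_inl, liftI_eq i hiI, hvA]
          | inr k =>
            show c (Sum.inr (S, k)) = _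
            simp only [c, Sum.elim_inr, lift𝒮_eq S hS𝒮, hvA]
        by_cases hp : i ∈ S
        · show B ⊨ ψ i S
          rw [show ψ i S = Formula.equivSentence (ρ i S) from if_pos hp,
            Formula.realize_equivSentence]
          rw [show ρ i S = φ.relabel (u i S) from rfl, Formula.realize_relabel]
          exact (realize_congr_val φ (fun x => hc x)).2 (hvalB.2 hp)
        · show B ⊨ ψ i S
          rw [show ψ i S = (Formula.equivSentence (ρ i S)).not from if_neg hp,
            Sentence.realize_not, Formula.realize_equivSentence]
          rw [show ρ i S = φ.relabel (u i S) from rfl, Formula.realize_relabel]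
          intro hcon
          exact hp (hvalB.1 ((realize_congr_val φ (fun x => hc x)).1 hcon))
    exact @Language.Theory.Model.isSatisfiable _ _ _ hBne _ hmodel
  -- Now extract the model with the full IP pattern.
  obtain ⟨N⟩ := hsat
  have hsub : (L.lhomWithConstants γ).onTheory (L.completeTheory B) ⊆ ⋃ o, Ts o :=
    Set.Subset.trans (by rfl) (Set.subset_iUnion Ts none)
  let N₀ : ((L.lhomWithConstants γ).onTheory (L.completeTheory B)).ModelType :=
    N.subtheoryModel hsub
  let NB : (L.completeTheory B).ModelType := N₀.reduct (L.lhomWithConstants γ)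
  refine ⟨NB, fun i k => ((L.con (Sum.inl (i, k) : γ) : N) : NB),
    fun S k => ((L.con (Sum.inr (S, k) : γ) : N) : NB), fun i S => ?_⟩
  have hψ : (N : Type _) ⊨ ψ i S :=
    N.is_model.realize_of_mem (ψ i S) (Set.mem_iUnion.2 ⟨some (i, S), rfl⟩)
  letI : L.Structure N := (L.lhomWithConstants γ).reduct N
  haveI : (L.lhomWithConstants γ).IsExpansionOn (N : Type _) := LHom.isExpansionOn_reduct _ _
  have key : φ.Realize (fun x => ((L.con (u i S x) : N) : NB)) ↔ i ∈ S := by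
    by_cases hp : i ∈ S
    · refine iff_of_true ?_ hp
      rw [show ψ i S = Formula.equivSentence (ρ i S) from if_pos hp,
        Formula.realize_equivSentence] at hψ
      rw [show ρ i S = φ.relabel (u i S) from rfl, Formula.realize_relabel] at hψ
      exact hψ
    · refine iff_of_false ?_ hp
      rw [show ψ i S = (Formula.equivSentence (ρ i S)).not from if_neg hp,
        Sentence.realize_not, Formula.realize_equivSentence] at hψ
      intro hcon
      refine hψ ?_
      rw [show ρ i S = φ.relabel (u i S) from rfl, Formula.realize_relabel]
      exact hcon
  refine Iff.trans ?_ key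
  exact realize_congr_val φ (fun x => by cases x <;> rfl)

end NIPPaper
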